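/- For the two-dimensional XOR rule s^{t+1}(c_{i,j}) = s^t(c_{i-1,j}) ⊕ s^t(c_{i+1,j}) ⊕ s^t(c_{i,j-1}) ⊕ s^t(c_{i,j+1}) on the 2×2 region ω = {c_{1,1}, c_{1,2}, c_{2,1}, c_{2,2}} with all 12 boundary cells freely controllable, the system is regionally controllable in one step: for every initial configuration x on ω and every desired configuration y on ω there exist boundary values realizing y after one step. -/

import Mathlib

/-! Each inner cell has exactly one vertical neighbour on the boundary, and no boundary cell is the
vertical neighbour of two inner cells. So put `x` on the inner block, `0` on the side cells, and let
the top or bottom cell above or below each inner cell cancel its two inner neighbours and supply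
the target value. This works over any abelian group. -/

section

variable {R : Type*} [AddCommGroup R]

def boundaryControl (x y : Fin 2 → Fin 2 → R) : Fin 4 → Fin 4 → R :=
  ![![0, y 0 0 - x 1 0 - x 0 1, y 0 1 - x 1 1 - x 0 0, 0],
    ![0, x 0 0, x 0 1, 0],
    ![0, x 1 0, x 1 1, 0],
    ![0, y 1 0 - x 0 0 - x 1 1, y 1 1 - x 0 1 - x 1 0, 0]]

theorem boundaryControl_inner (x y : Fin 2 → Fin 2 → R) (i j : Fin 2) :
    boundaryControl x y i.succ.castSucc j.succ.castSucc = x i j := by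
  fin_cases i <;> fin_cases j <;> rfl

theorem neighbourSum_boundaryControl (x y : Fin 2 → Fin 2 → R) (i j : Fin 2) :
    boundaryControl x y i.castSucc.castSucc j.succ.castSucc
        + boundaryControl x y i.succ.succ j.succ.castSucc
        + boundaryControl x y i.succ.castSucc j.castSucc.castSucc
        + boundaryControl x y i.succ.castSucc j.succ.succ = y i j := by
  fin_cases i <;> fin_cases j <;> simp [boundaryControl] <;> abel

end

/-- The 2D XOR rule on the inner 2×2 region of a 4×4 grid, with the 12 outer
cells freely controllable, is regionally controllable in one step. -/
theorem xor2D_one_step_controllable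
    (x y : Fin 2 → Fin 2 → ZMod 2) :
    ∃ g : Fin 4 → Fin 4 → ZMod 2,
      (∀ i j : Fin 2, g i.succ.castSucc j.succ.castSucc = x i j) ∧
      (∀ i j : Fin 2,
        y i j = g i.castSucc.castSucc j.succ.castSucc
          + g i.succ.succ j.succ.castSucc
          + g i.succ.castSucc j.castSucc.castSucc
          + g i.succ.castSucc j.succ.succ) :=
  ⟨boundaryControl x y, boundaryControl_inner x y,
    fun i j => (neighbourSum_boundaryControl x y i j).symm⟩
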